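/- Let s ≥ 3 be odd, and let R = ⟨a,b⟩ ≤ Sym(4s) with a = (2s−1,2s)(4s−1,4s), b = (1,3,…,4s−1,2,4,…,4s). Write a_k = a^{b^k}. Define ρ on the complex s-dimensional space with basis e₁,…,e_s by, for x = a₁^{ε₁}···a_s^{ε_s} b^m, e_i^{ρ(x)} = (−1)^{−ε_{2−2i} + Σ_{k=1}^{s} ε_k} · e_{i + m(s−1)/2} (subscripts mod s). Then ρ is a representation of R and ρ(ab) + ρ(b) = 2E_{1,(s+1)/2}, which is a nonzero nilpotent (hence non-diagonalizable) matrix. -/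

import Mathlib

/-!
Label the points by `ℤ/4s` along the `4s`-cycle `b`, so that `b` acts as `n ↦ n + 1` and `a` adds
`2s` to the labels `n ≡ -1 (mod s)` and fixes the others. Then `b^m a_s^{ε_s} ⋯ a₁^{ε₁}` acts as
`n ↦ n + m + 2s·ε(n + 1)`. Hence every element of `R` has such a normal form, and two normal forms
multiply by adding the exponents of `b` and the (shifted) `ε`'s, with a carry `b^{2s} = a_s ⋯ a₁`
when the exponents overflow. The matrices `ρ(x)` are monomial and obey the same rule, because
`2 · (s - 1)/2 = -1` in `ℤ/s` and, `s` being odd, the carry contributes the sign `(-1)^{s+1} = 1`.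
Finally `ρ(ab) + ρ(b) = 2E` is a nonzero square-zero matrix, and a diagonalizable nilpotent matrix
vanishes.
-/

/-- A square complex matrix is diagonalizable if it is similar to a diagonal matrix. -/
def IsDiagonalizable {n : Type*} [Fintype n] [DecidableEq n] (M : Matrix n n ℂ) : Prop :=
  ∃ P : Matrix n n ℂ, IsUnit P ∧ (P⁻¹ * M * P).IsDiag

open Equiv

namespace MonomialRep

variable {s : ℕ}

def res : ZMod (4 * s) →+* ZMod s := ZMod.castHom (dvd_mul_left s 4) (ZMod s)

lemma res_add_natCast_two_mul (n : ZMod (4 * s)) (k : ℕ) :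
    res (n + ((2 * s * k : ℕ) : ZMod (4 * s))) = res n := by
  simp [res]

lemma natCast_two_mul_mod_two (k : ℕ) :
    ((2 * s * (k % 2) : ℕ) : ZMod (4 * s)) = ((2 * s * k : ℕ) : ZMod (4 * s)) := by
  conv_rhs => rw [← Nat.mod_add_div k 2]
  push_cast [mul_add]
  rw [show (2 * s * (2 * (k / 2 : ℕ)) : ZMod (4 * s)) = ((4 * s : ℕ) : ZMod (4 * s)) * (k / 2 : ℕ)
    by push_cast; ring, ZMod.natCast_self, zero_mul, add_zero]

lemma two_mul_half_eq_neg_one (hodd : Odd s) :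
    (2 : ZMod s) * (((s - 1) / 2 : ℕ) : ZMod s) = -1 := by
  obtain ⟨r, rfl⟩ := hodd
  have h := ZMod.natCast_self (2 * r + 1)
  rw [show (2 * r + 1 - 1) / 2 = r by omega]
  push_cast at h
  linear_combination h

lemma natCast_half_succ_ne_one (hs : 3 ≤ s) : (((s + 1) / 2 : ℕ) : ZMod s) ≠ 1 := by
  have : Fact (1 < s) := ⟨by omega⟩
  intro h
  have := congrArg ZMod.val h
  rw [ZMod.val_one, ZMod.val_cast_of_lt (by omega)] at this
  omega

lemma exists_carry {m m' : ℕ} (hm : 1 ≤ m) (hm₂ : m ≤ 2 * s) (hm' : 1 ≤ m') (hm₂' : m' ≤ 2 * s) :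
    ∃ δ, 2 * s * δ ≤ m + m' ∧ 1 ≤ m + m' - 2 * s * δ ∧ m + m' - 2 * s * δ ≤ 2 * s := by
  by_cases h : m + m' ≤ 2 * s
  · exact ⟨0, by omega, by omega, by omega⟩
  · exact ⟨1, by omega, by omega, by omega⟩

section WeightedShift

variable {G R : Type*} [AddCommGroup G] [Fintype G] [DecidableEq G] [Semiring R]

def weightedShift (c : G) (f : G → R) : Matrix G G R :=
  Matrix.of fun i j => if i = j + c then f j else 0

lemma weightedShift_mul (c c' : G) (f f' : G → R) :
    weightedShift c f * weightedShift c' f' =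
      weightedShift (c' + c) (fun j => f (j + c') * f' j) := by
  ext i j
  rw [Matrix.mul_apply, Finset.sum_eq_single (j + c')]
  · simp [weightedShift, add_assoc]
  · intro l _ hl
    simp [weightedShift, hl]
  · simp

end WeightedShift

variable [NeZero s]

/-- `label n = b^n 0`, the point reached after `n` steps along the cycle `b`. -/
def label (n : ZMod (4 * s)) : Fin (4 * s) :=
  ⟨if n.val < 2 * s then 2 * n.val else 2 * n.val - 4 * s + 1, by
    have := n.val_lt; split <;> omega⟩

lemma label_injective : Function.Injective (label (s := s)) := by
  intro m n h
  have hm := m.val_lt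
  have hn := n.val_lt
  have h' := congrArg Fin.val h
  simp only [label] at h'
  exact ZMod.val_injective _ (by split_ifs at h' <;> omega)

lemma label_bijective : Function.Bijective (label (s := s)) :=
  (Fintype.bijective_iff_injective_and_card _).mpr ⟨label_injective, by simp⟩

lemma perm_ext_label {x y : Perm (Fin (4 * s))} (h : ∀ n, x (label n) = y (label n)) :
    x = y :=
  Equiv.ext fun i => by
    obtain ⟨n, rfl⟩ := label_bijective.2 i
    exact h n

lemma val_add_one (n : ZMod (4 * s)) :
    (n + 1).val = if n.val + 1 = 4 * s then 0 else n.val + 1 := by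
  have : Fact (1 < 4 * s) := ⟨by have := NeZero.pos s; omega⟩
  rw [ZMod.val_add, ZMod.val_one]
  split_ifs with h
  · rw [h, Nat.mod_self]
  · exact Nat.mod_eq_of_lt (by have := n.val_lt; omega)

lemma val_add_natCast_two_mul (n : ZMod (4 * s)) :
    (n + ((2 * s : ℕ) : ZMod (4 * s))).val =
      if n.val < 2 * s then n.val + 2 * s else n.val - 2 * s := by
  have hn := n.val_lt
  rw [ZMod.val_add, ZMod.val_natCast, Nat.mod_eq_of_lt (by omega : 2 * s < 4 * s)]
  split_ifs
  · exact Nat.mod_eq_of_lt (by omega)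
  · rw [Nat.mod_eq_sub_mod (by omega), Nat.mod_eq_of_lt (by omega)]
    omega

lemma res_eq_neg_one_iff (n : ZMod (4 * s)) :
    res n = -1 ↔
      n.val + 1 = s ∨ n.val + 1 = 2 * s ∨ n.val + 1 = 3 * s ∨ n.val + 1 = 4 * s := by
  have hn := n.val_lt
  rw [res, ZMod.castHom_apply, ZMod.cast_eq_val, eq_neg_iff_add_eq_zero, ← Nat.cast_one,
    ← Nat.cast_add, ZMod.natCast_eq_zero_iff]
  constructor
  · rintro ⟨k, hk⟩
    have : k ≤ 4 := by nlinarith [NeZero.pos s]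
    interval_cases k <;> omega
  · rintro (h | h | h | h) <;> rw [h] <;> simp

lemma apply_label_eq_label_add_one {b : Perm (Fin (4 * s))}
    (hb : ∀ i : Fin (4 * s), (b i : ℕ) =
      if (i : ℕ) % 2 = 0 then (if (i : ℕ) = 4 * s - 2 then 1 else (i : ℕ) + 2)
      else (if (i : ℕ) = 4 * s - 1 then 0 else (i : ℕ) + 2))
    (n : ZMod (4 * s)) : b (label n) = label (n + 1) := by
  have := n.val_lt
  ext
  rw [hb]
  simp only [label, val_add_one]
  split_ifs <;> omega

def Shifts (x : Perm (Fin (4 * s))) (f : ZMod s → ℕ) : Prop :=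
  ∀ n, x (label n) = label (n + ((2 * s * f (res n) : ℕ) : ZMod (4 * s)))

lemma shifts_swap_mul_swap {h₁ : 2 * s - 2 < 4 * s} {h₂ : 2 * s - 1 < 4 * s}
    {h₃ : 4 * s - 2 < 4 * s} {h₄ : 4 * s - 1 < 4 * s} :
    Shifts (swap ⟨2 * s - 2, h₁⟩ ⟨2 * s - 1, h₂⟩ * swap ⟨4 * s - 2, h₃⟩ ⟨4 * s - 1, h₄⟩)
      (Pi.single (-1) 1) := by
  intro n
  have hn := n.val_lt
  apply Fin.ext
  by_cases h : res n = -1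
  · simp only [Pi.single_apply, h, if_true, mul_one]
    rw [res_eq_neg_one_iff] at h
    simp only [Perm.mul_apply, swap_apply_def, label, val_add_natCast_two_mul, Fin.ext_iff,
      apply_ite Fin.val]
    split_ifs <;> omega
  · simp only [Pi.single_apply, h, if_false, mul_zero, Nat.cast_zero, add_zero]
    rw [res_eq_neg_one_iff] at h
    simp only [Perm.mul_apply, swap_apply_def, label, Fin.ext_iff, apply_ite Fin.val]
    split_ifs <;> omega

section Shifts

variable {x y : Perm (Fin (4 * s))} {f g : ZMod s → ℕ}

lemma shifts_one : Shifts (1 : Perm (Fin (4 * s))) 0 := fun n => by simp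

lemma Shifts.mul (hx : Shifts x f) (hy : Shifts y g) : Shifts (x * y) (f + g) := fun n => by
  rw [Perm.mul_apply, hy, hx, res_add_natCast_two_mul, add_assoc, ← Nat.cast_add, Pi.add_apply,
    mul_add, add_comm (2 * s * g (res n))]

lemma Shifts.pow (hx : Shifts x f) (e : ℕ) : Shifts (x ^ e) (e • f) := by
  induction e with
  | zero => simpa using shifts_one
  | succ e ih =>
    rw [pow_succ, succ_nsmul]
    exact ih.mul hx

lemma Shifts.list_prod_ofFn {k : ℕ} {F : Fin k → Perm (Fin (4 * s))} {φ : Fin k → ZMod s → ℕ}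
    (h : ∀ i, Shifts (F i) (φ i)) : Shifts (List.ofFn F).prod (∑ i, φ i) := by
  induction k with
  | zero => simpa using shifts_one
  | succ k ih =>
    rw [List.ofFn_succ, List.prod_cons, Fin.sum_univ_succ]
    exact (h 0).mul (ih fun i => h i.succ)

end Shifts

section Cycle

variable {a b : Perm (Fin (4 * s))} (hb : ∀ n, b (label n) = label (n + 1))
include hb

lemma pow_apply_label (k : ℕ) (n : ZMod (4 * s)) :
    (b ^ k) (label n) = label (n + (k : ZMod (4 * s))) := by
  induction k generalizing n with
  | zero => simp
  | succ k ih => rw [pow_succ', Perm.mul_apply, ih, hb, Nat.cast_succ, add_assoc]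

lemma inv_pow_apply_label (k : ℕ) (n : ZMod (4 * s)) :
    (b ^ k)⁻¹ (label n) = label (n - (k : ZMod (4 * s))) := by
  rw [Perm.inv_eq_iff_eq, pow_apply_label hb, sub_add_cancel]

lemma Shifts.conj {f : ZMod s → ℕ} (ha : Shifts a f) (k : ℕ) :
    Shifts (b ^ k * a * (b ^ k)⁻¹) (fun r => f (r - k)) := fun n => by
  rw [Perm.mul_apply, Perm.mul_apply, inv_pow_apply_label hb, ha, pow_apply_label hb, map_sub,
    map_natCast]
  congr 1
  ring

end Cycle

lemma sum_fin_natCast {M : Type*} [AddCommMonoid M] (φ : ZMod s → M) :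
    ∑ k : Fin s, φ (k : ℕ) = ∑ j, φ j := by
  refine Fintype.sum_bijective _ ((Fintype.bijective_iff_injective_and_card _).mpr
    ⟨fun k l h => Fin.ext ?_, by simp⟩) _ _ fun _ => rfl
  simpa [ZMod.val_cast_of_lt k.isLt, ZMod.val_cast_of_lt l.isLt] using congrArg ZMod.val h

lemma sum_fin_natCast_add {M : Type*} [AddCommMonoid M] (φ : ZMod s → M) (t : ZMod s) :
    ∑ k : Fin s, φ ((k : ℕ) + t) = ∑ j, φ j :=
  (sum_fin_natCast fun j => φ (j + t)).trans (Equiv.sum_comp (Equiv.addRight t) φ)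

lemma sum_fin_natCast_sub {M : Type*} [AddCommMonoid M] (φ : ZMod s → M) :
    ∑ k : Fin s, φ ((s - k : ℕ) : ZMod s) = ∑ j, φ j := by
  have h (k : Fin s) : ((s - k : ℕ) : ZMod s) = -((k : ℕ) : ZMod s) := by
    rw [Nat.cast_sub k.isLt.le, ZMod.natCast_self, zero_sub]
  simp_rw [h]
  exact (sum_fin_natCast fun j => φ (-j)).trans (Equiv.sum_comp (Equiv.neg _) φ)

def word (a b : Perm (Fin (4 * s))) (ε : ZMod s → ℕ) : Perm (Fin (4 * s)) :=
  (List.ofFn fun k : Fin s =>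
    (b ^ (s - (k : ℕ)) * a * (b ^ (s - (k : ℕ)))⁻¹) ^ (ε ((s - (k : ℕ) : ℕ) : ZMod s))).prod

lemma shifts_word {a b : Perm (Fin (4 * s))} (hb : ∀ n, b (label n) = label (n + 1))
    (ha : Shifts a (Pi.single (-1) 1)) (ε : ZMod s → ℕ) :
    Shifts (word a b ε) (fun r => ε (r + 1)) := by
  unfold word
  convert Shifts.list_prod_ofFn fun k : Fin s =>
    (ha.conj hb (s - k)).pow (ε ((s - (k : ℕ) : ℕ) : ZMod s)) using 1
  funext r
  have hr : ∀ j : ZMod s, r - j = -1 ↔ j = r + 1 := fun j => by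
    constructor <;> intro h <;> linear_combination -h
  simp only [Finset.sum_apply, Pi.smul_apply, smul_eq_mul, Pi.single_apply, hr, mul_ite, mul_one,
    mul_zero]
  rw [sum_fin_natCast_sub fun j => if j = r + 1 then ε j else 0, Finset.sum_ite_eq']
  simp

def HasNormalForm (a b x : Perm (Fin (4 * s))) : Prop :=
  ∃ (ε : ZMod s → ℕ) (m : ℕ), (∀ j, ε j ≤ 1) ∧ 1 ≤ m ∧ m ≤ 2 * s ∧ x = b ^ m * word a b ε

section NormalForm

variable {a b : Perm (Fin (4 * s))} (hb : ∀ n, b (label n) = label (n + 1))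
  (ha : Shifts a (Pi.single (-1) 1))
include hb ha

lemma bpow_mul_word_apply (m : ℕ) (ε : ZMod s → ℕ) (n : ZMod (4 * s)) :
    (b ^ m * word a b ε) (label n) =
      label (n + (m : ZMod (4 * s)) + ((2 * s * ε (res n + 1) : ℕ) : ZMod (4 * s))) := by
  rw [Perm.mul_apply, shifts_word hb ha ε n, pow_apply_label hb, add_right_comm]

lemma eq_bpow_mul_word_of_apply {x : Perm (Fin (4 * s))} {m : ℕ} {ε : ZMod s → ℕ}
    (h : ∀ n, x (label n) =
      label (n + (m : ZMod (4 * s)) + ((2 * s * ε (res n + 1) : ℕ) : ZMod (4 * s)))) :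
    x = b ^ m * word a b ε :=
  perm_ext_label fun n => by rw [h, bpow_mul_word_apply hb ha]

lemma bpow_mul_word_mul_bpow_mul_word {m m' δ : ℕ} (hδ : 2 * s * δ ≤ m + m')
    (ε ε' : ZMod s → ℕ) :
    b ^ m * word a b ε * (b ^ m' * word a b ε') =
      b ^ (m + m' - 2 * s * δ) * word a b (fun j => (ε (j + (m' : ZMod s)) + ε' j + δ) % 2) := by
  refine eq_bpow_mul_word_of_apply hb ha fun n => ?_
  have hres : res (n + (m' : ZMod (4 * s)) + ((2 * s * ε' (res n + 1) : ℕ) : ZMod (4 * s))) + 1 =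
      res n + 1 + (m' : ZMod s) := by
    rw [res_add_natCast_two_mul, map_add, map_natCast, add_right_comm]
  rw [Perm.mul_apply, bpow_mul_word_apply hb ha, bpow_mul_word_apply hb ha, hres,
    natCast_two_mul_mod_two]
  congr 1
  push_cast [Nat.cast_sub hδ]
  ring

lemma eq_bpow_one_mul_word_zero : b = b ^ 1 * word a b 0 :=
  eq_bpow_mul_word_of_apply hb ha fun n => by simp [hb]

lemma mul_eq_bpow_one_mul_word_single : b * a = b ^ 1 * word a b (Pi.single 0 1) := by
  refine eq_bpow_mul_word_of_apply hb ha fun n => ?_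
  rw [Perm.mul_apply, ha, hb, add_right_comm]
  simp only [Pi.single_apply, add_eq_zero_iff_eq_neg, Nat.cast_one]

lemma one_eq_bpow_mul_word : 1 = b ^ (2 * s) * word a b 1 := by
  refine eq_bpow_mul_word_of_apply hb ha fun n => ?_
  have h4 : ((4 * s : ℕ) : ZMod (4 * s)) = 0 := ZMod.natCast_self _
  rw [Perm.one_apply]
  congr 1
  push_cast [Pi.one_apply] at h4 ⊢
  linear_combination -h4

lemma eq_bpow_mul_word_ite :
    a = b ^ (2 * s) * word a b (fun j => if j = 0 then 0 else 1) := by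
  refine eq_bpow_mul_word_of_apply hb ha fun n => ?_
  have h4 : ((4 * s : ℕ) : ZMod (4 * s)) = 0 := ZMod.natCast_self _
  rw [ha]
  congr 1
  simp only [Pi.single_apply, ← add_eq_zero_iff_eq_neg]
  split_ifs
  · push_cast
    ring
  · push_cast at h4 ⊢
    linear_combination -h4

lemma HasNormalForm.mul {x y : Perm (Fin (4 * s))} (hx : HasNormalForm a b x)
    (hy : HasNormalForm a b y) : HasNormalForm a b (x * y) := by
  obtain ⟨ε, m, -, hm₁, hm₂, rfl⟩ := hx
  obtain ⟨ε', m', -, hm₁', hm₂', rfl⟩ := hy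
  obtain ⟨δ, hδ, h₁, h₂⟩ := exists_carry hm₁ hm₂ hm₁' hm₂'
  exact ⟨_, _, fun j => Nat.le_of_lt_succ (Nat.mod_lt _ two_pos), h₁, h₂,
    bpow_mul_word_mul_bpow_mul_word hb ha hδ ε ε'⟩

lemma hasNormalForm_of_mem_closure {x : Perm (Fin (4 * s))}
    (hx : x ∈ Subgroup.closure {a, b}) : HasNormalForm a b x := by
  have hs := NeZero.pos s
  rw [← Subgroup.mem_toSubmonoid, Subgroup.closure_toSubmonoid_of_finite] at hx
  induction hx using Submonoid.closure_induction with
  | mem x hx =>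
    rcases hx with rfl | rfl
    · exact ⟨_, 2 * s, fun j => by split_ifs <;> simp, by omega, le_rfl,
        eq_bpow_mul_word_ite hb ha⟩
    · exact ⟨0, 1, fun _ => zero_le_one, le_rfl, by omega, eq_bpow_one_mul_word_zero hb ha⟩
  | one => exact ⟨1, 2 * s, fun _ => le_rfl, by omega, le_rfl, one_eq_bpow_mul_word hb ha⟩
  | mul x y _ _ hx hy => exact hx.mul hb ha hy

end NormalForm

variable (R : Type*) [CommRing R]

def repMatrix (m : ℕ) (ε : ZMod s → ℕ) : Matrix (ZMod s) (ZMod s) R :=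
  weightedShift ((m * ((s - 1) / 2) : ℕ) : ZMod s)
    fun j => (-1 : R) ^ (ε (2 - 2 * j) + ∑ k : Fin s, ε ((k : ℕ) + 1))

lemma repMatrix_mul (hodd : Odd s) {m m' δ : ℕ} (hδ : 2 * s * δ ≤ m + m')
    (ε ε' : ZMod s → ℕ) :
    repMatrix R m ε * repMatrix R m' ε' =
      repMatrix R (m + m' - 2 * s * δ) (fun j => (ε (j + (m' : ZMod s)) + ε' j + δ) % 2) := by
  rw [repMatrix, repMatrix, weightedShift_mul, repMatrix]
  congr 1
  · rw [Nat.sub_mul, Nat.cast_sub (Nat.mul_le_mul_right _ hδ)]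
    push_cast [ZMod.natCast_self]
    ring
  · funext j
    have harg : 2 - 2 * (j + ((m' * ((s - 1) / 2) : ℕ) : ZMod s)) = 2 - 2 * j + m' := by
      push_cast
      linear_combination (-(m' : ZMod s)) * two_mul_half_eq_neg_one hodd
    have hsum : ∑ k : Fin s, (ε ((k : ℕ) + 1 + (m' : ZMod s)) + ε' ((k : ℕ) + 1) + δ) =
        ∑ k : Fin s, ε ((k : ℕ) + 1) + ∑ k : Fin s, ε' ((k : ℕ) + 1) + s * δ := by
      simp only [Finset.sum_add_distrib, add_assoc, sum_fin_natCast_add, Finset.sum_const,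
        Finset.card_univ, Fintype.card_fin, smul_eq_mul]
    have hmod := Finset.sum_nat_mod Finset.univ 2
      fun k : Fin s => ε ((k : ℕ) + 1 + (m' : ZMod s)) + ε' ((k : ℕ) + 1) + δ
    have hcarry : (s * δ + δ) % 2 = 0 := by
      rw [← Nat.even_iff, ← Nat.succ_mul]
      exact hodd.add_one.mul_right δ
    rw [harg, ← pow_add]
    apply neg_one_pow_congr
    simp only [Nat.even_iff]
    generalize s * δ = t at hsum hcarry
    omega

lemma repMatrix_single_add_repMatrix_zero (hodd : Odd s) :
    repMatrix R 1 (Pi.single 0 1) + repMatrix R 1 0 =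
      Matrix.single (((s + 1) / 2 : ℕ) : ZMod s) 1 2 := by
  have hhalf := two_mul_half_eq_neg_one hodd
  have hsum : ∑ k : Fin s, (Pi.single 0 1 : ZMod s → ℕ) ((k : ℕ) + 1) = 1 := by
    rw [sum_fin_natCast_add (Pi.single 0 1 : ZMod s → ℕ), Finset.sum_pi_single']
    simp
  obtain ⟨r, rfl⟩ := hodd
  rw [show (2 * r + 1 - 1) / 2 = r by omega] at hhalf
  have hj (j : ZMod (2 * r + 1)) : 2 - 2 * j = 0 ↔ j = 1 := by
    constructor
    · intro e
      linear_combination (r : ZMod (2 * r + 1)) * e + (j - 1) * hhalf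
    · rintro rfl
      ring
  ext i j
  simp only [repMatrix, weightedShift, Matrix.add_apply, Matrix.of_apply, Matrix.single_apply,
    one_mul, hsum, Pi.zero_apply, Finset.sum_const_zero, show (2 * r + 1 - 1) / 2 = r by omega,
    show (2 * r + 1 + 1) / 2 = r + 1 by omega, Nat.cast_add, Nat.cast_one]
  by_cases hij : i = j + r
  · by_cases hj1 : j = 1
    · subst hj1
      simp [hij, add_comm, one_add_one_eq_two]
    · simp [hij, (hj j).not.mpr hj1, Ne.symm hj1]
  · simp only [hij, if_false, add_zero, right_eq_ite_iff]
    rintro ⟨rfl, rfl⟩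
    exact absurd (add_comm _ _) hij

end MonomialRep

lemma Matrix.single_ne_zero {n R : Type*} [DecidableEq n] [Zero R] {i j : n} {c : R}
    (hc : c ≠ 0) : Matrix.single i j c ≠ 0 := fun h =>
  hc ((Matrix.single_apply_same _ _ _).symm.trans (congrFun (congrFun h i) j))

lemma Matrix.isNilpotent_single_of_ne {n R : Type*} [Fintype n] [DecidableEq n] [Semiring R]
    {i j : n} (h : i ≠ j) (c : R) : IsNilpotent (Matrix.single i j c) :=
  ⟨2, by rw [sq, Matrix.single_mul_single_of_ne (h := h.symm)]⟩

lemma IsDiagonalizable.eq_zero_of_isNilpotent {n : Type*} [Fintype n] [DecidableEq n]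
    {M : Matrix n n ℂ} (hM : IsDiagonalizable M) (hnil : IsNilpotent M) : M = 0 := by
  obtain ⟨_, ⟨u, rfl⟩, hD⟩ := hM
  rw [← Matrix.coe_units_inv] at hD
  set D := ((u⁻¹ : (Matrix n n ℂ)ˣ) : Matrix n n ℂ) * M * u
  have hdiag : IsNilpotent D.diag := by
    obtain ⟨k, hk⟩ := hnil
    refine ⟨k, Matrix.diagonal_injective ?_⟩
    rw [← Matrix.diagonal_pow, hD.diagonal_diag, Units.conj_pow', hk, mul_zero, zero_mul]
    simp
  have hD0 : D = 0 := by
    rw [← hD.diagonal_diag, hdiag.eq_zero]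
    simp
  simpa [D, mul_assoc] using
    congrArg (fun X => (u : Matrix n n ℂ) * X * ((u⁻¹ : (Matrix n n ℂ)ˣ) : Matrix n n ℂ)) hD0

open MonomialRep in
theorem stmt11 (s : ℕ) (hs : 3 ≤ s) (hodd : Odd s) [NeZero s]
    (a b : Equiv.Perm (Fin (4 * s)))
    (ha : a = Equiv.swap ⟨2 * s - 2, by omega⟩ ⟨2 * s - 1, by omega⟩ *
      Equiv.swap ⟨4 * s - 2, by omega⟩ ⟨4 * s - 1, by omega⟩)
    (hb : ∀ i : Fin (4 * s), (b i : ℕ) =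
      if (i : ℕ) % 2 = 0 then (if (i : ℕ) = 4 * s - 2 then 1 else (i : ℕ) + 2)
      else (if (i : ℕ) = 4 * s - 1 then 0 else (i : ℕ) + 2))
    (ρ : ↥(Subgroup.closure ({a, b} : Set (Equiv.Perm (Fin (4 * s))))) →
      Matrix (ZMod s) (ZMod s) ℂ)
    (hρ : ∀ (x : ↥(Subgroup.closure ({a, b} : Set (Equiv.Perm (Fin (4 * s))))))
        (ε : ZMod s → ℕ) (m : ℕ), (∀ j, ε j ≤ 1) → 1 ≤ m → m ≤ 2 * s →
      (x : Equiv.Perm (Fin (4 * s))) = b ^ m *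
        (List.ofFn fun k : Fin s =>
          (b ^ (s - (k : ℕ)) * a * (b ^ (s - (k : ℕ)))⁻¹) ^
            (ε ((s - (k : ℕ) : ℕ) : ZMod s))).prod →
      ρ x = Matrix.of fun i j : ZMod s =>
        if i = j + ((m * ((s - 1) / 2) : ℕ) : ZMod s) then
          (-1 : ℂ) ^ (ε (2 - 2 * j) + ∑ k : Fin s, ε ((k : ℕ) + 1)) else 0) :
    (∀ x y : ↥(Subgroup.closure ({a, b} : Set (Equiv.Perm (Fin (4 * s))))),
      ρ (x * y) = ρ x * ρ y) ∧
    ρ ⟨b * a, Subgroup.mul_mem _ (Subgroup.subset_closure (by simp))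
        (Subgroup.subset_closure (by simp))⟩ +
      ρ ⟨b, Subgroup.subset_closure (by simp)⟩ =
      Matrix.single (((s + 1) / 2 : ℕ) : ZMod s) (1 : ZMod s) (2 : ℂ) ∧
    Matrix.single (((s + 1) / 2 : ℕ) : ZMod s) (1 : ZMod s) (2 : ℂ) ≠ 0 ∧
    IsNilpotent (Matrix.single (((s + 1) / 2 : ℕ) : ZMod s) (1 : ZMod s) (2 : ℂ)) ∧
    ¬ IsDiagonalizable
      (Matrix.single (((s + 1) / 2 : ℕ) : ZMod s) (1 : ZMod s) (2 : ℂ)) := by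
  have hb' := apply_label_eq_label_add_one hb
  have ha' : Shifts a (Pi.single (-1) 1) := ha ▸ shifts_swap_mul_swap
  have hρ' : ∀ (x : Subgroup.closure ({a, b} : Set (Perm (Fin (4 * s))))) ε m,
      (∀ j, ε j ≤ 1) → 1 ≤ m → m ≤ 2 * s → (x : Perm (Fin (4 * s))) = b ^ m * word a b ε →
      ρ x = repMatrix ℂ m ε := hρ
  have hEnil := Matrix.isNilpotent_single_of_ne (natCast_half_succ_ne_one hs) (2 : ℂ)
  have hE0 : Matrix.single (((s + 1) / 2 : ℕ) : ZMod s) (1 : ZMod s) (2 : ℂ) ≠ 0 :=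
    Matrix.single_ne_zero two_ne_zero
  refine ⟨fun x y => ?_, ?_, hE0, hEnil, fun hdiag => hE0 (hdiag.eq_zero_of_isNilpotent hEnil)⟩
  · obtain ⟨ε, m, hε, hm₁, hm₂, hx⟩ := hasNormalForm_of_mem_closure hb' ha' x.2
    obtain ⟨ε', m', hε', hm₁', hm₂', hy⟩ := hasNormalForm_of_mem_closure hb' ha' y.2
    obtain ⟨δ, hδ, h₁, h₂⟩ := exists_carry hm₁ hm₂ hm₁' hm₂'
    rw [hρ' x ε m hε hm₁ hm₂ hx, hρ' y ε' m' hε' hm₁' hm₂' hy, repMatrix_mul ℂ hodd hδ]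
    exact hρ' _ _ _ (fun j => Nat.le_of_lt_succ (Nat.mod_lt _ two_pos)) h₁ h₂
      (by rw [Subgroup.coe_mul, hx, hy, bpow_mul_word_mul_bpow_mul_word hb' ha' hδ])
  · rw [hρ' _ _ 1 (fun j => by rw [Pi.single_apply]; split_ifs <;> simp) le_rfl (by omega)
      (mul_eq_bpow_one_mul_word_single hb' ha'),
      hρ' _ 0 1 (fun _ => zero_le_one) le_rfl (by omega) (eq_bpow_one_mul_word_zero hb' ha')]
    exact repMatrix_single_add_repMatrix_zero ℂ hodd
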